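/- Assume in addition c ≠ 1, c ≠ q, and c q^{−1} ∉ {q^{−m} : m ∈ ℕ}. For all x, y ∈ ℂ with |x| < 1, the contiguous relation in the denominator parameter holds: Φ₁(a, b; c q^{−1}; q; x, y) = Φ₁(a, b; c; q; x, y) + (c x (1−a)(1−b)/((q−c)(1−c))) · Φ₁(aq, bq; cq; q; x, y) + (c y (1−a)/((q−c)(1−c))) · Φ₁(aq, b; cq; q; qx, y). -/

import Mathlib

open scoped BigOperators

noncomputable section

/-- The q-shifted factorial `(a;q)_n = ∏_{r=0}^{n-1} (1 - a q^r)`. -/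
def qPoch (q a : ℂ) (n : ℕ) : ℂ := ∏ r ∈ Finset.range n, (1 - a * q ^ r)

/-- The basic Humbert function `Φ₁(a,b;c;q;x,y)` as a double series over `ℕ × ℕ`. -/
def Phi1 (q a b c x y : ℂ) : ℂ :=
  ∑' p : ℕ × ℕ,
    qPoch q a (p.1 + p.2) * qPoch q b p.1 * x ^ p.1 * y ^ p.2 /
      (qPoch q c (p.1 + p.2) * qPoch q q p.1 * qPoch q q p.2)

/-- The basic Humbert function `Φ₂(a,b;c;q;x,y)` as a double series over `ℕ × ℕ`. -/
def Phi2 (q a b c x y : ℂ) : ℂ :=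
  ∑' p : ℕ × ℕ,
    qPoch q a p.1 * qPoch q b p.2 * x ^ p.1 * y ^ p.2 /
      (qPoch q c (p.1 + p.2) * qPoch q q p.1 * qPoch q q p.2)

/-- The basic Humbert function `Φ₃(a;b;q;x,y)` as a double series over `ℕ × ℕ`. -/
def Phi3 (q a b x y : ℂ) : ℂ :=
  ∑' p : ℕ × ℕ,
    qPoch q a p.1 * x ^ p.1 * y ^ p.2 /
      (qPoch q b (p.1 + p.2) * qPoch q q p.1 * qPoch q q p.2)

/-- The one-variable q-difference operator. -/
def qDiff (q : ℂ) (f : ℂ → ℂ) : ℂ → ℂ := fun x => (f x - f (q * x)) / ((1 - q) * x)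

/-- The q-difference operator in the first variable of a two-variable function. -/
def qDx (q : ℂ) (f : ℂ → ℂ → ℂ) : ℂ → ℂ → ℂ :=
  fun x y => (f x y - f (q * x) y) / ((1 - q) * x)

/-- The q-difference operator in the second variable of a two-variable function. -/
def qDy (q : ℂ) (f : ℂ → ℂ → ℂ) : ℂ → ℂ → ℂ :=
  fun x y => (f x y - f x (q * y)) / ((1 - q) * y)

/-- The infinite q-shifted factorial `(a;q)_∞ = ∏_{r=0}^∞ (1 - a q^r)`. -/
def qPochInf (q a : ℂ) : ℂ := ∏' r : ℕ, (1 - a * q ^ r)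

/-!
Since `(c/q;q)_m = (1 - c/q) (c;q)_{m-1}` and `(c;q)_m = (c;q)_{m-1} (1 - c q^{m-1})`, the
`(n, k)` term of `Φ₁(a,b;c/q)` is the `(n, k)` term of `Φ₁(a,b;c)` times
`1 + c (1 - q^{n+k}) / (q - c)`. Splitting `1 - q^{n+k} = (1 - q^n) + q^n (1 - q^k)`, the two extra
pieces vanish at `n = 0`, resp. `k = 0`, and after the shift `n ↦ n + 1`, resp. `k ↦ k + 1`, they
become the terms of the two other series times their coefficients.

As `tsum` is `0` on non-summable families, the sums can only be split because each of the four
series converges exactly when `∑ₖ ‖(a;q)_k‖ ‖y‖^k` does, and this criterion is unchanged by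
`a ↦ a q` for `a ≠ 1`.
-/

open Filter Topology Function Finset

lemma mul_pow_ne_one_of_ne_zpow_neg {G₀ : Type*} [GroupWithZero G₀] {c q : G₀}
    (hc : ∀ m : ℕ, c ≠ q ^ (-(m : ℤ))) (r : ℕ) : c * q ^ r ≠ 1 := fun h =>
  hc r (by rw [zpow_neg, zpow_natCast]; exact eq_inv_of_mul_eq_one_left h)

lemma succ_fst_injective : Injective fun p : ℕ × ℕ => (p.1 + 1, p.2) := fun _ _ h => by
  simpa [Prod.ext_iff] using h

lemma succ_snd_injective : Injective fun p : ℕ × ℕ => (p.1, p.2 + 1) := fun _ _ h => by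
  simpa [Prod.ext_iff] using h

section qPoch

variable {q : ℂ}

@[simp]
lemma qPoch_zero (q a : ℂ) : qPoch q a 0 = 1 :=
  prod_range_zero _

lemma qPoch_succ (q a : ℂ) (n : ℕ) : qPoch q a (n + 1) = qPoch q a n * (1 - a * q ^ n) :=
  prod_range_succ _ _

lemma qPoch_succ' (q a : ℂ) (n : ℕ) : qPoch q a (n + 1) = (1 - a) * qPoch q (a * q) n := by
  rw [qPoch, prod_range_succ', pow_zero, mul_one, mul_comm]
  exact congrArg _ (prod_congr rfl fun r _ => by ring)

lemma qPoch_add (q a : ℂ) (m n : ℕ) :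
    qPoch q a (m + n) = qPoch q a m * qPoch q (a * q ^ m) n := by
  simp only [qPoch, prod_range_add, pow_add, mul_assoc]

lemma qPoch_ne_zero {a : ℂ} (ha : ∀ r : ℕ, a * q ^ r ≠ 1) (n : ℕ) : qPoch q a n ≠ 0 :=
  prod_ne_zero_iff.2 fun r _ => sub_ne_zero.2 (ha r).symm

lemma mul_mul_pow_ne_one {c : ℂ} (hc : ∀ r : ℕ, c * q ^ r ≠ 1) (r : ℕ) : c * q * q ^ r ≠ 1 := by
  rw [mul_assoc, ← pow_succ']
  exact hc (r + 1)

lemma self_mul_pow_ne_one (hq1 : ‖q‖ < 1) (r : ℕ) : q * q ^ r ≠ 1 := fun h => by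
  have : ‖q * q ^ r‖ < 1 := by
    rw [← pow_succ', norm_pow]
    exact pow_lt_one₀ (norm_nonneg q) hq1 r.succ_ne_zero
  simp [h] at this

lemma qPoch_self_ne_zero (hq1 : ‖q‖ < 1) (n : ℕ) : qPoch q q n ≠ 0 :=
  qPoch_ne_zero (self_mul_pow_ne_one hq1) n

lemma summable_norm_neg_mul_pow (hq1 : ‖q‖ < 1) (a : ℂ) : Summable fun r : ℕ => ‖-(a * q ^ r)‖ := by
  simpa only [norm_neg, norm_mul, norm_pow] using
    (summable_geometric_of_lt_one (norm_nonneg q) hq1).mul_left ‖a‖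

lemma norm_qPoch_le (hq1 : ‖q‖ < 1) (a : ℂ) (n : ℕ) :
    ‖qPoch q a n‖ ≤ Real.exp (‖a‖ / (1 - ‖q‖)) := by
  have hsum : ∑ r ∈ range n, ‖-(a * q ^ r)‖ ≤ ‖a‖ / (1 - ‖q‖) := by
    simp only [norm_neg, norm_mul, norm_pow, ← mul_sum, div_eq_mul_inv]
    refine mul_le_mul_of_nonneg_left ?_ (norm_nonneg a)
    have := geom_sum_Ico_le_of_lt_one (m := 0) (n := n) (norm_nonneg q) hq1
    rwa [← range_eq_Ico, pow_zero, one_div] at this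
  calc ‖qPoch q a n‖ ≤ ‖qPoch q a n - 1‖ + ‖(1 : ℂ)‖ := norm_le_norm_sub_add _ _
    _ ≤ Real.exp (∑ r ∈ range n, ‖-(a * q ^ r)‖) := by
      have := (range n).norm_prod_one_add_sub_one_le fun r => -(a * q ^ r)
      simp only [qPoch, sub_eq_add_neg, norm_one] at this ⊢
      linarith
    _ ≤ Real.exp (‖a‖ / (1 - ‖q‖)) := Real.exp_le_exp.2 hsum

lemma norm_qPoch_add_le (hq1 : ‖q‖ < 1) (a : ℂ) (m n : ℕ) :
    ‖qPoch q a (m + n)‖ ≤ ‖qPoch q a m‖ * Real.exp (‖a‖ / (1 - ‖q‖)) := by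
  rw [qPoch_add, norm_mul]
  gcongr
  refine (norm_qPoch_le hq1 _ n).trans ?_
  have : 0 < 1 - ‖q‖ := by linarith
  gcongr
  rw [norm_mul, norm_pow]
  exact mul_le_of_le_one_right (norm_nonneg a) (pow_le_one₀ (norm_nonneg q) hq1.le)

lemma tendsto_qPoch_qPochInf (hq1 : ‖q‖ < 1) (a : ℂ) :
    Tendsto (qPoch q a) atTop (𝓝 (qPochInf q a)) := by
  have h := (multipliable_one_add_of_summable (summable_norm_neg_mul_pow hq1 a)).tendsto_prod_tprod_nat
  simp only [← sub_eq_add_neg] at h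
  exact h

lemma qPochInf_ne_zero (hq1 : ‖q‖ < 1) {a : ℂ} (ha : ∀ r : ℕ, a * q ^ r ≠ 1) :
    qPochInf q a ≠ 0 := by
  simpa only [qPochInf, sub_eq_add_neg] using
    tprod_one_add_ne_zero_of_summable
      (fun r => by simpa [← sub_eq_add_neg, sub_eq_zero] using (ha r).symm)
      (summable_norm_neg_mul_pow hq1 a)

lemma exists_norm_inv_qPoch_le (hq1 : ‖q‖ < 1) {a : ℂ} (ha : ∀ r : ℕ, a * q ^ r ≠ 1) :
    ∃ M, ∀ n, ‖(qPoch q a n)⁻¹‖ ≤ M := by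
  obtain ⟨M, hM⟩ :=
    ((tendsto_qPoch_qPochInf hq1 a).inv₀ (qPochInf_ne_zero hq1 ha)).norm.bddAbove_range
  exact ⟨M, fun n => hM ⟨n, rfl⟩⟩

end qPoch

def phi1Term (q a b c x y : ℂ) (p : ℕ × ℕ) : ℂ :=
  qPoch q a (p.1 + p.2) * qPoch q b p.1 * x ^ p.1 * y ^ p.2 /
    (qPoch q c (p.1 + p.2) * qPoch q q p.1 * qPoch q q p.2)

lemma Phi1_eq_tsum_phi1Term (q a b c x y : ℂ) :
    Phi1 q a b c x y = ∑' p, phi1Term q a b c x y p := rfl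

section Summability

variable {q a b c x y : ℂ}

lemma summable_phi1Term (hq1 : ‖q‖ < 1) (hc : ∀ r : ℕ, c * q ^ r ≠ 1) (hx : ‖x‖ < 1)
    (hy : Summable fun k => ‖qPoch q a k‖ * ‖y‖ ^ k) : Summable (phi1Term q a b c x y) := by
  obtain ⟨M₁, hM₁⟩ := exists_norm_inv_qPoch_le hq1 hc
  obtain ⟨M₂, hM₂⟩ := exists_norm_inv_qPoch_le hq1 (self_mul_pow_ne_one hq1)
  have hM₁0 : 0 ≤ M₁ := (norm_nonneg _).trans (hM₁ 0)
  have hM₂0 : 0 ≤ M₂ := (norm_nonneg _).trans (hM₂ 0)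
  set E : ℂ → ℝ := fun a => Real.exp (‖a‖ / (1 - ‖q‖))
  have hgeom := summable_geometric_of_lt_one (norm_nonneg x) hx
  refine Summable.of_norm_bounded ((hgeom.mul_of_nonneg hy (fun _ => by positivity)
    (fun _ => by positivity)).mul_left (E a * E b * (M₁ * M₂ * M₂))) fun ⟨n, k⟩ => ?_
  calc ‖phi1Term q a b c x y (n, k)‖
      = ‖qPoch q a (k + n)‖ * ‖qPoch q b n‖ * ‖x‖ ^ n * ‖y‖ ^ k *
          (‖(qPoch q c (n + k))⁻¹‖ * ‖(qPoch q q n)⁻¹‖ * ‖(qPoch q q k)⁻¹‖) := by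
        simp only [phi1Term, div_eq_mul_inv, mul_inv, norm_mul, norm_pow, add_comm k n]
    _ ≤ ‖qPoch q a k‖ * E a * E b * ‖x‖ ^ n * ‖y‖ ^ k * (M₁ * M₂ * M₂) := by
        gcongr
        exacts [norm_qPoch_add_le hq1 a k n, norm_qPoch_le hq1 b n, hM₁ _, hM₂ n, hM₂ k]
    _ = E a * E b * (M₁ * M₂ * M₂) * (‖x‖ ^ n * (‖qPoch q a k‖ * ‖y‖ ^ k)) := by ring

lemma summable_norm_qPoch_mul_pow_of_summable_phi1Term (hq1 : ‖q‖ < 1)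
    (hc : ∀ r : ℕ, c * q ^ r ≠ 1) (h : Summable (phi1Term q a b c x y)) :
    Summable fun k => ‖qPoch q a k‖ * ‖y‖ ^ k := by
  have h₀ : Summable fun k => ‖phi1Term q a b c x y (0, k)‖ :=
    (h.comp_injective fun _ _ h => (Prod.mk.inj h).2).norm
  refine (h₀.mul_left (Real.exp (‖c‖ / (1 - ‖q‖)) * Real.exp (‖q‖ / (1 - ‖q‖)))).of_nonneg_of_le
    (fun k => by positivity) fun k => ?_
  calc ‖qPoch q a k‖ * ‖y‖ ^ k
      = ‖phi1Term q a b c x y (0, k)‖ * (‖qPoch q c k‖ * ‖qPoch q q k‖) := by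
        simp [phi1Term, qPoch_ne_zero hc k, qPoch_self_ne_zero hq1 k]
    _ ≤ _ := by
        rw [mul_comm]
        gcongr <;> exact norm_qPoch_le hq1 _ k

lemma summable_norm_qPoch_mul_pow_iff (r : ℝ) :
    (Summable fun k => ‖qPoch q a k‖ * r ^ k) ↔
      Summable fun k => ‖1 - a‖ * r * (‖qPoch q (a * q) k‖ * r ^ k) := by
  rw [← summable_nat_add_iff 1]
  congr! 2 with k
  rw [qPoch_succ', norm_mul, pow_succ]
  ring

lemma summable_norm_qPoch_mul_pow_of_mul (r : ℝ)
    (h : Summable fun k => ‖qPoch q (a * q) k‖ * r ^ k) :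
    Summable fun k => ‖qPoch q a k‖ * r ^ k :=
  (summable_norm_qPoch_mul_pow_iff r).2 (h.mul_left _)

lemma summable_norm_qPoch_mul_mul_pow (ha : a ≠ 1) (r : ℝ)
    (h : Summable fun k => ‖qPoch q a k‖ * r ^ k) :
    Summable fun k => ‖qPoch q (a * q) k‖ * r ^ k := by
  rcases eq_or_ne r 0 with rfl | hr
  · exact (summable_nat_add_iff 1).1 (by simp [summable_zero])
  · have hc : ‖1 - a‖ * r ≠ 0 := mul_ne_zero (norm_ne_zero_iff.2 (sub_ne_zero.2 ha.symm)) hr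
    exact (summable_mul_left_iff hc).1 ((summable_norm_qPoch_mul_pow_iff r).1 h)

end Summability

section Contiguity

variable {q a b c x y : ℂ}

lemma phi1Term_mul_inv (hq : q ≠ 0) (hc : ∀ r : ℕ, c * q ^ r ≠ 1) (hcq : c ≠ q) (n k : ℕ) :
    phi1Term q a b (c * q⁻¹) x y (n, k) =
      phi1Term q a b c x y (n, k) * (1 + c * (1 - q ^ (n + k)) / (q - c)) := by
  have hqc : q - c ≠ 0 := sub_ne_zero.2 hcq.symm
  simp only [phi1Term]
  generalize n + k = m
  cases m with
  | zero => simp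
  | succ m =>
    have hm : 1 - c * q ^ m ≠ 0 := sub_ne_zero.2 (hc m).symm
    rw [qPoch_succ' q (c * q⁻¹), qPoch_succ q c, inv_mul_cancel_right₀ hq]
    field_simp
    ring

lemma extend_succ_fst_phi1Term (hq1 : ‖q‖ < 1) (hc : ∀ r : ℕ, c * q ^ r ≠ 1) (hcq : c ≠ q)
    (n k : ℕ) :
    extend (fun p : ℕ × ℕ => (p.1 + 1, p.2))
        (fun p => c * x * (1 - a) * (1 - b) / ((q - c) * (1 - c)) *
          phi1Term q (a * q) (b * q) (c * q) x y p) 0 (n, k) =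
      phi1Term q a b c x y (n, k) * (c * (1 - q ^ n) / (q - c)) := by
  cases n with
  | zero => rw [extend_apply' _ _ _ (by simp)]; simp
  | succ n =>
    refine (succ_fst_injective.extend_apply _ _ (n, k)).trans ?_
    have := qPoch_ne_zero (mul_mul_pow_ne_one hc) (n + k)
    have := qPoch_self_ne_zero hq1 n
    have := qPoch_self_ne_zero hq1 k
    have : 1 - q * q ^ n ≠ 0 := sub_ne_zero.2 (self_mul_pow_ne_one hq1 n).symm
    have : 1 - c ≠ 0 := sub_ne_zero.2 (by simpa using (hc 0).symm)
    have : q - c ≠ 0 := sub_ne_zero.2 hcq.symm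
    dsimp only [phi1Term]
    rw [Nat.add_right_comm n 1 k, qPoch_succ' q a, qPoch_succ' q b, qPoch_succ' q c, qPoch_succ q q,
      pow_succ x, pow_succ' q]
    field_simp

lemma extend_succ_snd_phi1Term (hq1 : ‖q‖ < 1) (hc : ∀ r : ℕ, c * q ^ r ≠ 1) (hcq : c ≠ q)
    (n k : ℕ) :
    extend (fun p : ℕ × ℕ => (p.1, p.2 + 1))
        (fun p => c * y * (1 - a) / ((q - c) * (1 - c)) *
          phi1Term q (a * q) b (c * q) (q * x) y p) 0 (n, k) =
      phi1Term q a b c x y (n, k) * (c * q ^ n * (1 - q ^ k) / (q - c)) := by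
  cases k with
  | zero => rw [extend_apply' _ _ _ (by simp)]; simp
  | succ k =>
    refine (succ_snd_injective.extend_apply _ _ (n, k)).trans ?_
    have := qPoch_ne_zero (mul_mul_pow_ne_one hc) (n + k)
    have := qPoch_self_ne_zero hq1 n
    have := qPoch_self_ne_zero hq1 k
    have : 1 - q * q ^ k ≠ 0 := sub_ne_zero.2 (self_mul_pow_ne_one hq1 k).symm
    have : 1 - c ≠ 0 := sub_ne_zero.2 (by simpa using (hc 0).symm)
    have : q - c ≠ 0 := sub_ne_zero.2 hcq.symm
    dsimp only [phi1Term]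
    rw [← add_assoc, qPoch_succ' q a, qPoch_succ' q c, qPoch_succ q q k, pow_succ y, pow_succ' q k,
      mul_pow]
    field_simp

lemma phi1Term_mul_inv_eq_add_extend (hq : q ≠ 0) (hq1 : ‖q‖ < 1) (hc : ∀ r : ℕ, c * q ^ r ≠ 1)
    (hcq : c ≠ q) :
    phi1Term q a b (c * q⁻¹) x y = phi1Term q a b c x y
      + extend (fun p : ℕ × ℕ => (p.1 + 1, p.2))
          (fun p => c * x * (1 - a) * (1 - b) / ((q - c) * (1 - c)) *
            phi1Term q (a * q) (b * q) (c * q) x y p) 0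
      + extend (fun p : ℕ × ℕ => (p.1, p.2 + 1))
          (fun p => c * y * (1 - a) / ((q - c) * (1 - c)) *
            phi1Term q (a * q) b (c * q) (q * x) y p) 0 := by
  ext ⟨n, k⟩
  rw [Pi.add_apply, Pi.add_apply, phi1Term_mul_inv hq hc hcq, extend_succ_fst_phi1Term hq1 hc hcq,
    extend_succ_snd_phi1Term hq1 hc hcq, pow_add]
  ring

end Contiguity

lemma Phi1_eq_zero_of_not_summable {q a b c x y : ℂ} (hq1 : ‖q‖ < 1)
    (hc : ∀ r : ℕ, c * q ^ r ≠ 1) (hy : ¬Summable fun k => ‖qPoch q a k‖ * ‖y‖ ^ k) :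
    Phi1 q a b c x y = 0 :=
  tsum_eq_zero_of_not_summable (mt (summable_norm_qPoch_mul_pow_of_summable_phi1Term hq1 hc) hy)

lemma Phi1_mul_inv_of_summable {q a b c x y : ℂ} (hq : q ≠ 0) (hq1 : ‖q‖ < 1)
    (hc : ∀ r : ℕ, c * q ^ r ≠ 1) (hcq : c ≠ q) (hx : ‖x‖ < 1)
    (hy : Summable fun k => ‖qPoch q a k‖ * ‖y‖ ^ k) :
    Phi1 q a b (c * q⁻¹) x y =
      Phi1 q a b c x y
        + c * x * (1 - a) * (1 - b) / ((q - c) * (1 - c)) *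
            Phi1 q (a * q) (b * q) (c * q) x y
        + c * y * (1 - a) / ((q - c) * (1 - c)) *
            Phi1 q (a * q) b (c * q) (q * x) y := by
  simp only [Phi1_eq_tsum_phi1Term]
  rw [phi1Term_mul_inv_eq_add_extend hq hq1 hc hcq]
  -- for `a = 1` both coefficients vanish, while the shifted series may diverge
  obtain rfl | ha := eq_or_ne a 1
  · simp [← Pi.zero_def, extend_zero]
  have hcq' := mul_mul_pow_ne_one hc
  have hy' := summable_norm_qPoch_mul_mul_pow ha _ hy
  have hqx : ‖q * x‖ < 1 := by
    rw [norm_mul]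
    exact mul_lt_one_of_nonneg_of_lt_one_left (norm_nonneg q) hq1 hx.le
  have hG := summable_phi1Term (b := b) hq1 hc hx hy
  have hE₁ := (summable_extend_zero succ_fst_injective).2
    ((summable_phi1Term (b := b * q) hq1 hcq' hx hy').mul_left
      (c * x * (1 - a) * (1 - b) / ((q - c) * (1 - c))))
  have hE₂ := (summable_extend_zero succ_snd_injective).2
    ((summable_phi1Term (b := b) hq1 hcq' hqx hy').mul_left
      (c * y * (1 - a) / ((q - c) * (1 - c))))
  simp only [Pi.add_apply]
  rw [Summable.tsum_add (hG.add hE₁) hE₂, Summable.tsum_add hG hE₁,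
    tsum_extend_zero succ_fst_injective, tsum_extend_zero succ_snd_injective, tsum_mul_left,
    tsum_mul_left]

theorem phi1_contiguous_c_general (q a b c : ℂ) (hq0 : 0 < ‖q‖) (hq1 : ‖q‖ < 1)
    (hc : ∀ m : ℕ, c ≠ q ^ (-(m : ℤ))) (hcq : c ≠ q)
    (hc' : ∀ m : ℕ, c * q⁻¹ ≠ q ^ (-(m : ℤ))) (x y : ℂ) (hx : ‖x‖ < 1) :
    Phi1 q a b (c * q⁻¹) x y =
      Phi1 q a b c x y
        + c * x * (1 - a) * (1 - b) / ((q - c) * (1 - c)) *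
            Phi1 q (a * q) (b * q) (c * q) x y
        + c * y * (1 - a) / ((q - c) * (1 - c)) *
            Phi1 q (a * q) b (c * q) (q * x) y := by
  have hcr := mul_pow_ne_one_of_ne_zpow_neg hc
  by_cases hy : Summable fun k => ‖qPoch q a k‖ * ‖y‖ ^ k
  · exact Phi1_mul_inv_of_summable (norm_pos_iff.1 hq0) hq1 hcr hcq hx hy
  · have hy' := mt (summable_norm_qPoch_mul_pow_of_mul _) hy
    rw [Phi1_eq_zero_of_not_summable hq1 (mul_pow_ne_one_of_ne_zpow_neg hc') hy,
      Phi1_eq_zero_of_not_summable hq1 hcr hy,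
      Phi1_eq_zero_of_not_summable hq1 (mul_mul_pow_ne_one hcr) hy',
      Phi1_eq_zero_of_not_summable hq1 (mul_mul_pow_ne_one hcr) hy']
    ring

/-- contiguous relation of Φ₁ in the denominator parameter. -/
theorem phi1_contiguous_c (q a b c : ℂ) (hq0 : 0 < ‖q‖) (hq1 : ‖q‖ < 1)
    (hc : ∀ m : ℕ, c ≠ q ^ (-(m : ℤ))) (hc1 : c ≠ 1) (hcq : c ≠ q)
    (hc' : ∀ m : ℕ, c * q⁻¹ ≠ q ^ (-(m : ℤ))) (x y : ℂ) (hx : ‖x‖ < 1) :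
    Phi1 q a b (c * q⁻¹) x y =
      Phi1 q a b c x y
        + c * x * (1 - a) * (1 - b) / ((q - c) * (1 - c)) *
            Phi1 q (a * q) (b * q) (c * q) x y
        + c * y * (1 - a) / ((q - c) * (1 - c)) *
            Phi1 q (a * q) b (c * q) (q * x) y :=
  phi1_contiguous_c_general q a b c hq0 hq1 hc hcq hc' x y hx
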